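/- For integer ℓ ≥ 1 define k_ℓ(s) = Σ_{j=0}^∞ s^{2j+1}/((2(j+ℓ))!!(2j+1)!!). Then k_ℓ(s) = (e^s / (2 s^ℓ)) (1 − ℓ(ℓ−1)/(2s) + (ℓ−2)(ℓ−1)ℓ(ℓ+1)/(8s²) + O(1/s³)) as s → ∞. -/

import Mathlib

/-!
Write `ℓ = m + 1`. Expressing both double factorials through factorials and using the Beta integral
`∫₀¹ u^(2j+1) (1-u²)^m du = j! m! / (2 (j+m+1)!)`, the series becomes
`k_ℓ(s) = (2^m m!)⁻¹ ∫₀¹ (1-u²)^m sinh(su) du`. The `e^(-su)` half of `sinh` contributes `O(1)`.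
For the `e^(su)` half, expand `(1-u²)^m = 2^m (1-u)^m (1 - (1-u)/2)^m` in powers of `1-u`: the
substitution `w = 1-u` turns each term into `e^s ∫₀¹ w^k e^(-sw) dw`, which is `e^s k!/s^(k+1)`
up to `O(1)`. The terms with `k ≤ m+2` give the three-term expansion, the others are
`O(e^s/s^(m+4))`.
-/

noncomputable section

/-- `k_ℓ(s) = Σ_{j=0}^∞ s^{2j+1} / ((2(j+ℓ))!! (2j+1)!!)`. -/
def kEven (ℓ : ℕ) (s : ℝ) : ℝ :=
  ∑' j : ℕ, s ^ (2 * j + 1) /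
    (((2 * (j + ℓ)).doubleFactorial : ℝ) * ((2 * j + 1).doubleFactorial : ℝ))

open Real Filter Asymptotics Finset
open scoped Nat

def expMoment (k : ℕ) (s : ℝ) : ℝ := ∫ w in (0 : ℝ)..1, w ^ k * exp (-(s * w))

lemma hasDerivAt_neg_exp_neg_mul_div {s : ℝ} (hs : s ≠ 0) (x : ℝ) :
    HasDerivAt (fun w => -exp (-(s * w)) / s) (exp (-(s * x))) x := by
  have := (((hasDerivAt_id x).const_mul s).neg.exp.neg).div_const s
  refine this.congr_deriv ?_
  field_simp
  simp

lemma expMoment_zero {s : ℝ} (hs : s ≠ 0) : expMoment 0 s = (1 - exp (-s)) / s := by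
  rw [expMoment]
  simp only [pow_zero, one_mul]
  rw [intervalIntegral.integral_eq_sub_of_hasDerivAt
    (fun x _ => hasDerivAt_neg_exp_neg_mul_div hs x)
    ((by fun_prop : Continuous _).intervalIntegrable _ _)]
  simp only [mul_one, mul_zero, neg_zero, exp_zero]
  ring

lemma expMoment_succ (k : ℕ) {s : ℝ} (hs : s ≠ 0) :
    expMoment (k + 1) s = -exp (-s) / s + (k + 1) / s * expMoment k s := by
  have hpow : ∀ x ∈ Set.uIcc (0 : ℝ) 1, HasDerivAt (fun w : ℝ => w ^ (k + 1)) ((k + 1) * x ^ k) x :=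
    fun x _ => by simpa using hasDerivAt_pow (k + 1) x
  have hparts := intervalIntegral.integral_mul_deriv_eq_deriv_mul hpow
    (fun x _ => hasDerivAt_neg_exp_neg_mul_div hs x)
    ((by fun_prop : Continuous _).intervalIntegrable _ _)
    ((by fun_prop : Continuous _).intervalIntegrable _ _)
  have hintegrand : (fun x : ℝ => ((k : ℝ) + 1) * x ^ k * (-exp (-(s * x)) / s))
      = fun x => -((k + 1) / s * (x ^ k * exp (-(s * x)))) := by
    funext x; field_simp
  rw [expMoment, hparts, hintegrand, intervalIntegral.integral_neg,
    intervalIntegral.integral_const_mul, ← expMoment]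
  simp only [one_pow, mul_one, mul_zero, zero_pow (Nat.succ_ne_zero k)]
  ring

lemma abs_factorial_div_pow_sub_expMoment_le (k : ℕ) {s : ℝ} (hs : 1 ≤ s) :
    |k ! / s ^ (k + 1) - expMoment k s| ≤ (k + 1)! * exp (-s) := by
  have hs0 : 0 < s := one_pos.trans_le hs
  have hexp_div : exp (-s) / s ≤ exp (-s) := div_le_self (exp_pos _).le hs
  induction k with
  | zero =>
    rw [expMoment_zero hs0.ne']
    have : (0 ! : ℝ) / s ^ 1 - (1 - exp (-s)) / s = exp (-s) / s := by
      rw [Nat.factorial_zero, Nat.cast_one, pow_one]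
      ring
    rw [this, abs_of_pos (by positivity)]
    simpa using hexp_div
  | succ k ih =>
    have hrec : ((k + 1)! : ℝ) / s ^ (k + 2) - expMoment (k + 1) s
        = exp (-s) / s + (k + 1) / s * (k ! / s ^ (k + 1) - expMoment k s) := by
      rw [expMoment_succ k hs0.ne', Nat.factorial_succ]
      push_cast
      field_simp
      ring
    have hcoeff : ((k : ℝ) + 1) / s ≤ k + 1 := div_le_self (by positivity) hs
    have hfact : (1 : ℝ) ≤ (k + 1)! := by exact_mod_cast (k + 1).factorial_pos
    calc |((k + 1)! : ℝ) / s ^ (k + 1 + 1) - expMoment (k + 1) s|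
        ≤ exp (-s) / s + (k + 1) / s * |k ! / s ^ (k + 1) - expMoment k s| := by
          rw [hrec]
          refine (abs_add_le _ _).trans_eq ?_
          rw [abs_of_pos (by positivity), abs_mul, abs_of_pos (by positivity)]
      _ ≤ (k + 1)! * exp (-s) + (k + 1) * ((k + 1)! * exp (-s)) := by
          gcongr
          exact hexp_div.trans (le_mul_of_one_le_left (exp_pos _).le hfact)
      _ = (k + 1 + 1)! * exp (-s) := by
          rw [Nat.factorial_succ (k + 1)]; push_cast; ring

lemma integral_one_sub_pow_mul_exp (k : ℕ) (s : ℝ) :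
    ∫ u in (0 : ℝ)..1, (1 - u) ^ k * exp (s * u) = exp s * expMoment k s := by
  have hreflect := intervalIntegral.integral_comp_sub_left (a := 0) (b := 1)
    (fun w => exp s * (w ^ k * exp (-(s * w)))) (1 : ℝ)
  simp only [sub_self, sub_zero] at hreflect
  rw [expMoment, ← intervalIntegral.integral_const_mul, ← hreflect]
  congr 1; funext u
  rw [mul_left_comm, ← exp_add]
  ring_nf

lemma hasDerivAt_one_sub_sq_pow (m : ℕ) (x : ℝ) :
    HasDerivAt (fun u : ℝ => -(1 - u ^ 2) ^ (m + 1) / (2 * (m + 1))) (x * (1 - x ^ 2) ^ m) x := by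
  have := ((((hasDerivAt_pow 2 x).const_sub 1).pow (m + 1)).neg).div_const (2 * ((m : ℝ) + 1))
  refine this.congr_deriv ?_
  push_cast
  field_simp

lemma integral_pow_mul_one_sub_sq_pow (j m : ℕ) :
    ∫ u in (0 : ℝ)..1, u ^ (2 * j + 1) * (1 - u ^ 2) ^ m
      = (j ! : ℝ) * m ! / (2 * (j + m + 1)!) := by
  induction j generalizing m with
  | zero =>
    simp only [mul_zero, zero_add, pow_one]
    rw [intervalIntegral.integral_eq_sub_of_hasDerivAt (fun x _ => hasDerivAt_one_sub_sq_pow m x)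
      ((by fun_prop : Continuous _).intervalIntegrable _ _), Nat.factorial_succ]
    push_cast
    field_simp
    simp
  | succ j ih =>
    have hpow : ∀ x ∈ Set.uIcc (0 : ℝ) 1,
        HasDerivAt (fun u : ℝ => u ^ (2 * j + 2)) ((2 * j + 2) * x ^ (2 * j + 1)) x :=
      fun x _ => by simpa using hasDerivAt_pow (2 * j + 2) x
    have hparts := intervalIntegral.integral_mul_deriv_eq_deriv_mul hpow
      (fun x _ => hasDerivAt_one_sub_sq_pow m x)
      ((by fun_prop : Continuous _).intervalIntegrable _ _)
      ((by fun_prop : Continuous _).intervalIntegrable _ _)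
    have hintegrand : (fun x : ℝ => (2 * (j : ℝ) + 2) * x ^ (2 * j + 1)
          * (-(1 - x ^ 2) ^ (m + 1) / (2 * (m + 1))))
        = fun x => -(((j : ℝ) + 1) / (m + 1) * (x ^ (2 * j + 1) * (1 - x ^ 2) ^ (m + 1))) := by
      funext x; field_simp
    calc ∫ u in (0 : ℝ)..1, u ^ (2 * (j + 1) + 1) * (1 - u ^ 2) ^ m
        = ∫ u in (0 : ℝ)..1, u ^ (2 * j + 2) * (u * (1 - u ^ 2) ^ m) := by
          congr 1; funext u; ring
      _ = ((j : ℝ) + 1) / (m + 1) * (j ! * (m + 1)! / (2 * (j + (m + 1) + 1)!)) := by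
          rw [hparts, hintegrand, intervalIntegral.integral_neg,
            intervalIntegral.integral_const_mul, ih]
          simp
      _ = (j + 1)! * m ! / (2 * (j + 1 + m + 1)!) := by
          rw [show j + (m + 1) + 1 = j + 1 + m + 1 by ring, Nat.factorial_succ j,
            Nat.factorial_succ m]
          push_cast
          field_simp

lemma doubleFactorial_mul_doubleFactorial_mul_factorial (j n : ℕ) :
    (2 * (j + n))‼ * (2 * j + 1)‼ * j ! = 2 ^ n * (j + n)! * (2 * j + 1)! := by
  rw [Nat.factorial_eq_mul_doubleFactorial, Nat.doubleFactorial_two_mul,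
    Nat.doubleFactorial_two_mul]
  ring

lemma kEven_term_eq (m j : ℕ) (s : ℝ) :
    s ^ (2 * j + 1) / (((2 * (j + (m + 1)))‼ : ℝ) * ((2 * j + 1)‼ : ℝ))
      = ((2 : ℝ) ^ m * m !)⁻¹
          * (s ^ (2 * j + 1) / (2 * j + 1)! * (j ! * m ! / (2 * (j + m + 1)!))) := by
  have hR : ((2 * (j + m + 1))‼ : ℝ) * (2 * j + 1)‼ * j !
      = 2 ^ (m + 1) * (j + m + 1)! * (2 * j + 1)! := by
    exact_mod_cast doubleFactorial_mul_doubleFactorial_mul_factorial j (m + 1)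
  field_simp
  linear_combination (-s ^ (2 * j + 1)) * hR

lemma kEven_succ_eq_integral (m : ℕ) {s : ℝ} (hs : 0 ≤ s) :
    kEven (m + 1) s
      = ((2 : ℝ) ^ m * m !)⁻¹ * ∫ u in (0 : ℝ)..1, (1 - u ^ 2) ^ m * sinh (s * u) := by
  have hsum : HasSum
      (fun j => ∫ u in (0 : ℝ)..1, (1 - u ^ 2) ^ m * ((s * u) ^ (2 * j + 1) / (2 * j + 1)!))
      (∫ u in (0 : ℝ)..1, (1 - u ^ 2) ^ m * sinh (s * u)) := by
    refine intervalIntegral.hasSum_integral_of_dominated_convergence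
      (fun j _ => s ^ (2 * j + 1) / (2 * j + 1)!)
      (fun j => (by fun_prop : Continuous _).aestronglyMeasurable) ?_
      (.of_forall fun _ _ => (hasSum_sinh s).summable) intervalIntegrable_const
      (.of_forall fun u _ => (hasSum_sinh (s * u)).mul_left _)
    refine fun j => .of_forall fun u hu => ?_
    rw [Set.uIoc_of_le zero_le_one] at hu
    obtain ⟨hu0, hu1⟩ := hu
    have hsq : 0 ≤ 1 - u ^ 2 := by nlinarith
    rw [norm_mul, norm_of_nonneg (pow_nonneg hsq m), norm_of_nonneg (by positivity)]
    calc (1 - u ^ 2) ^ m * ((s * u) ^ (2 * j + 1) / (2 * j + 1)!)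
        ≤ 1 * (s ^ (2 * j + 1) / (2 * j + 1)!) := by
          gcongr
          · exact pow_le_one₀ hsq (by nlinarith)
          · exact mul_le_of_le_one_right hs hu1
      _ = s ^ (2 * j + 1) / (2 * j + 1)! := one_mul _
  rw [← (hsum.mul_left _).tsum_eq, kEven]
  congr 1; funext j
  rw [kEven_term_eq]
  congr 1
  rw [← integral_pow_mul_one_sub_sq_pow, ← intervalIntegral.integral_const_mul]
  congr 1; funext u
  ring

lemma integral_mul_sinh {f : ℝ → ℝ} (hf : Continuous f) (s a b : ℝ) :
    ∫ u in a..b, f u * sinh (s * u)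
      = ((∫ u in a..b, f u * exp (s * u)) - ∫ u in a..b, f u * exp (-(s * u))) / 2 := by
  rw [← intervalIntegral.integral_sub ((by fun_prop : Continuous _).intervalIntegrable _ _)
    ((by fun_prop : Continuous _).intervalIntegrable _ _), ← intervalIntegral.integral_div]
  congr 1; funext u
  rw [sinh_eq]
  ring

def oneSubSqCoeff (m i : ℕ) : ℝ := 2 ^ m * m.choose i * (-1 / 2) ^ i

lemma one_sub_sq_pow_eq_sum (m : ℕ) (u : ℝ) {n : ℕ} (hn : m < n) :
    (1 - u ^ 2) ^ m = ∑ i ∈ range n, oneSubSqCoeff m i * (1 - u) ^ (m + i) := by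
  have hfactor : (1 - u ^ 2) ^ m = 2 ^ m * (1 - u) ^ m * (-(1 - u) / 2 + 1) ^ m := by
    rw [← mul_pow, ← mul_pow]; ring
  rw [hfactor, add_pow, mul_sum, ← sum_subset (range_subset_range.2 hn)]
  · refine sum_congr rfl fun i _ => ?_
    rw [oneSubSqCoeff, div_pow, neg_pow, div_pow]
    ring
  · intro i _ hi
    rw [mem_range, not_lt] at hi
    simp [oneSubSqCoeff, Nat.choose_eq_zero_of_lt hi]

lemma integral_one_sub_sq_pow_mul_exp (m : ℕ) (s : ℝ) {n : ℕ} (hn : m < n) :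
    ∫ u in (0 : ℝ)..1, (1 - u ^ 2) ^ m * exp (s * u)
      = ∑ i ∈ range n, oneSubSqCoeff m i * (exp s * expMoment (m + i) s) := by
  simp_rw [one_sub_sq_pow_eq_sum m _ hn, sum_mul, mul_assoc]
  rw [intervalIntegral.integral_finsetSum
    fun i _ => (by fun_prop : Continuous _).intervalIntegrable _ _]
  simp_rw [intervalIntegral.integral_const_mul, integral_one_sub_pow_mul_exp]

lemma abs_integral_one_sub_sq_pow_mul_exp_neg_le_one (m : ℕ) {s : ℝ} (hs : 0 ≤ s) :
    |∫ u in (0 : ℝ)..1, (1 - u ^ 2) ^ m * exp (-(s * u))| ≤ 1 := by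
  have h := intervalIntegral.norm_integral_le_of_norm_le_const (a := 0) (b := 1) (C := 1)
    (f := fun u => (1 - u ^ 2) ^ m * exp (-(s * u))) fun u hu => by
      rw [Set.uIoc_of_le zero_le_one] at hu
      obtain ⟨hu0, hu1⟩ := hu
      have hsq : 0 ≤ 1 - u ^ 2 := by nlinarith
      rw [norm_mul, norm_of_nonneg (pow_nonneg hsq m), norm_of_nonneg (exp_pos _).le]
      exact mul_le_one₀ (pow_le_one₀ hsq (by nlinarith)) (exp_pos _).le
        (exp_le_one_iff.2 (by nlinarith))
  simpa using h

lemma isBigO_one_exp_div_pow (n : ℕ) : (fun _ : ℝ => (1 : ℝ)) =O[atTop] fun s => exp s / s ^ n :=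
  IsBigO.of_bound' <| ((tendsto_exp_div_pow_atTop n).eventually_ge_atTop 1).mono fun s hs => by
    rw [norm_one]
    exact hs.trans (le_abs_self _)

lemma isBigO_exp_mul_div_pow_exp_div_pow (a : ℝ) {n k : ℕ} (h : n ≤ k) :
    (fun s => exp s * (a / s ^ k)) =O[atTop] fun s => exp s / s ^ n :=
  IsBigO.of_bound |a| <| (eventually_ge_atTop 1).mono fun s hs => by
    have hs0 : 0 < s := one_pos.trans_le hs
    rw [norm_mul, norm_div, norm_pow, norm_of_nonneg (exp_pos s).le, norm_of_nonneg hs0.le,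
      norm_of_nonneg (by positivity : 0 ≤ exp s / s ^ n), norm_eq_abs]
    calc exp s * (|a| / s ^ k) = |a| * (exp s / s ^ k) := by ring
      _ ≤ |a| * (exp s / s ^ n) := by gcongr

lemma isBigO_exp_mul_factorial_div_pow_sub_expMoment (k : ℕ) :
    (fun s => exp s * (k ! / s ^ (k + 1) - expMoment k s)) =O[atTop] fun _ => (1 : ℝ) :=
  IsBigO.of_bound ((k + 1)!) <| (eventually_ge_atTop 1).mono fun s hs => by
    rw [norm_mul, norm_of_nonneg (exp_pos s).le, norm_one, mul_one, norm_eq_abs]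
    calc exp s * |k ! / s ^ (k + 1) - expMoment k s| ≤ exp s * ((k + 1)! * exp (-s)) := by
          gcongr
          exact abs_factorial_div_pow_sub_expMoment_le k hs
      _ = (k + 1)! := by
          rw [exp_neg]
          field_simp

def kEvenExpansion (ℓ : ℕ) (s : ℝ) : ℝ :=
  exp s / (2 * s ^ ℓ) * (1 - (ℓ : ℝ) * ((ℓ : ℝ) - 1) / (2 * s)
    + ((ℓ : ℝ) - 2) * ((ℓ : ℝ) - 1) * (ℓ : ℝ) * ((ℓ : ℝ) + 1) / (8 * s ^ 2))

lemma sum_range_three_oneSubSqCoeff_eq (m : ℕ) {s : ℝ} (hs : s ≠ 0) :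
    ((2 : ℝ) ^ m * m !)⁻¹ / 2 *
        ∑ i ∈ range 3, oneSubSqCoeff m i * (exp s * ((m + i)! / s ^ (m + i + 1)))
      = kEvenExpansion (m + 1) s := by
  simp only [kEvenExpansion, oneSubSqCoeff, sum_range_succ, range_one, sum_singleton,
    Nat.choose_zero_right, Nat.choose_one_right, Nat.cast_choose_two, Nat.factorial_succ, add_zero]
  push_cast
  field_simp
  ring

lemma isBigO_kEven_sub_kEvenExpansion (ℓ : ℕ) (hℓ : 1 ≤ ℓ) :
    (fun s => kEven ℓ s - kEvenExpansion ℓ s) =O[atTop] fun s => exp s / s ^ (ℓ + 3) := by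
  obtain ⟨m, rfl⟩ : ∃ m, ℓ = m + 1 := ⟨ℓ - 1, by omega⟩
  have hdecomp : ∀ᶠ s in atTop, ((2 : ℝ) ^ m * m !)⁻¹ / 2 * ((∑ i ∈ range m,
        oneSubSqCoeff m (3 + i) * (exp s * ((m + (3 + i))! / s ^ (m + (3 + i) + 1))))
      - (∑ i ∈ range (3 + m),
        oneSubSqCoeff m i * (exp s * ((m + i)! / s ^ (m + i + 1) - expMoment (m + i) s)))
      - ∫ u in (0 : ℝ)..1, (1 - u ^ 2) ^ m * exp (-(s * u)))
      = kEven (m + 1) s - kEvenExpansion (m + 1) s := by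
    filter_upwards [eventually_gt_atTop 0] with s hs
    set L := ∑ i ∈ range 3, oneSubSqCoeff m i * (exp s * ((m + i)! / s ^ (m + i + 1)))
    set M := ∑ i ∈ range m,
      oneSubSqCoeff m (3 + i) * (exp s * ((m + (3 + i))! / s ^ (m + (3 + i) + 1)))
    set E := ∑ i ∈ range (3 + m),
      oneSubSqCoeff m i * (exp s * ((m + i)! / s ^ (m + i + 1) - expMoment (m + i) s))
    have hsplit : ∑ i ∈ range (3 + m), oneSubSqCoeff m i * (exp s * ((m + i)! / s ^ (m + i + 1)))
        = L + M := sum_range_add _ 3 m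
    have hmoments : ∑ i ∈ range (3 + m), oneSubSqCoeff m i * (exp s * expMoment (m + i) s)
        = L + M - E := by
      rw [← hsplit, ← sum_sub_distrib]
      exact sum_congr rfl fun i _ => by ring
    rw [kEven_succ_eq_integral m hs.le, integral_mul_sinh (by fun_prop),
      integral_one_sub_sq_pow_mul_exp m s (n := 3 + m) (by omega),
      ← sum_range_three_oneSubSqCoeff_eq m hs.ne', hmoments]
    ring
  refine (IsBigO.const_mul_left ?_ _).congr' hdecomp EventuallyEq.rfl
  refine ((IsBigO.fun_sum fun i _ => ?_).sub (IsBigO.fun_sum fun i _ => ?_)).sub ?_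
  · exact (isBigO_exp_mul_div_pow_exp_div_pow _ (by omega)).const_mul_left _
  · exact ((isBigO_exp_mul_factorial_div_pow_sub_expMoment _).trans
      (isBigO_one_exp_div_pow _)).const_mul_left _
  · refine (IsBigO.of_bound' <| (eventually_ge_atTop 0).mono fun s hs => ?_).trans
      (isBigO_one_exp_div_pow _)
    simpa using abs_integral_one_sub_sq_pow_mul_exp_neg_le_one m hs

theorem stmt9 (ℓ : ℕ) (hℓ : 1 ≤ ℓ) :
    ∃ C > (0:ℝ), ∃ S > (0:ℝ), ∀ s ≥ S,
      |kEven ℓ s - Real.exp s / (2 * s ^ ℓ) *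
          (1 - (ℓ : ℝ) * ((ℓ : ℝ) - 1) / (2 * s)
            + ((ℓ : ℝ) - 2) * ((ℓ : ℝ) - 1) * (ℓ : ℝ) * ((ℓ : ℝ) + 1) / (8 * s ^ 2))|
      ≤ C * (Real.exp s / (2 * s ^ ℓ)) * (1 / s ^ 3) := by
  obtain ⟨C, hC, hbound⟩ := (isBigO_kEven_sub_kEvenExpansion ℓ hℓ).exists_pos
  obtain ⟨S, hS⟩ := eventually_atTop.1 (hbound.bound.and (eventually_gt_atTop 0))
  refine ⟨2 * C, by positivity, max S 1, by positivity, fun s hs => ?_⟩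
  obtain ⟨hle, hs0⟩ := hS s (le_of_max_le_left hs)
  rw [← norm_eq_abs]
  refine hle.trans_eq ?_
  rw [norm_of_nonneg (by positivity), pow_add]
  field_simp
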